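/- arXiv:2407.12178 — 2 statements merged into one kernel-verified Lean document; each statement's English description precedes it below -/
import Mathlib

section
/- Let μ'_N be the search time of the non-curricular policy that enumerates all N-tuples of positive integers in order of increasing sum, where the target tuple (a*_1, …, a*_N) has i.i.d. geometric(1/τ) coordinates. Then E[μ'_N] ≥ Σ_{n=N}^∞ s_{n-N} · C(n-1, N-1) (1-1/τ)^{n-N} (1/τ)^N where s_j = Σ_{i=1}^{j} C(N+i-2, N-1), and for τ > 1 and sufficiently large N, E[μ'_N] > Nτ + 1. -/
/-!
Write `N = k + 1` and `p = 1 / τ`. The level `m = n - N` of the target is negative binomial,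
with weight `C(m + k, k) (1 - p)^m p^N`, and by the hockey-stick identity the lower levels hold
`s_m = C(m + k, k + 1)` tuples. Since `s_m ≤ s_{m+1}`, the mean guess index on level `m` is at
least `s_m`, which gives the first bound. For the second, `s_{m+1} ≥ 1 + m N`, so that index is at
least `1 + N m / 2`; as the negative binomial law has mean `N (1 - p) / p = N (τ - 1)`, this gives
`E[μ'_N] ≥ 1 + N² (τ - 1) / 2`, which exceeds `N τ + 1` once `N > 2 τ / (τ - 1)`.
The series converge because `C(m + a, a) C(m + b, b) ≤ C(a + b, a) C(m + a + b, a + b)` dominates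
the summands by a negative binomial series.
-/

open Finset

theorem Nat.sum_range_add_choose_eq (m k : ℕ) :
    ∑ i ∈ range m, (i + k).choose k = (m + k).choose (k + 1) := by
  cases m with
  | zero => simp
  | succ n => rw [Nat.sum_range_add_choose, Nat.add_right_comm]

theorem Nat.one_add_mul_le_choose (m k : ℕ) : 1 + m * (k + 1) ≤ (m + k + 1).choose (k + 1) := by
  induction m with
  | zero => simp
  | succ m ih =>
    have hk : k + 1 ≤ (m + k + 1).choose k := by
      simpa using Nat.choose_le_choose k (show k + 1 ≤ m + k + 1 by omega)
    rw [show m + 1 + k + 1 = m + k + 1 + 1 by omega, Nat.choose_succ_succ]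
    linarith [Nat.succ_mul m (k + 1)]

theorem Nat.choose_add_mul_choose_add_le (m a b : ℕ) :
    (m + a).choose a * (m + b).choose b ≤ (a + b).choose a * (m + (a + b)).choose (a + b) := by
  have key := Nat.choose_mul (n := m + (a + b)) (k := m + a) (s := m) (by omega)
  rw [show m + (a + b) - m = a + b by omega, show m + a - m = a by omega] at key
  calc (m + a).choose a * (m + b).choose b
      ≤ (m + (a + b)).choose (m + a) * (m + a).choose m := by
        rw [mul_comm, Nat.choose_symm_add,
          Nat.choose_symm_of_eq_add (show m + (a + b) = m + a + b by omega)]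
        exact Nat.mul_le_mul_right _ (Nat.choose_le_choose b (by omega))
    _ = (a + b).choose a * (m + (a + b)).choose (a + b) := by
        rw [key, Nat.choose_symm_add, mul_comm]

theorem summable_choose_mul_choose_mul_geometric (a b : ℕ) {r : ℝ} (hr : ‖r‖ < 1) :
    Summable fun m : ℕ => ((m + a).choose a : ℝ) * (m + b).choose b * r ^ m := by
  refine Summable.of_norm_bounded ((summable_choose_mul_geometric_of_norm_lt_one (a + b)
    (r := ‖r‖) (by simpa using hr)).mul_left ((a + b).choose a : ℝ)) fun m => ?_
  simp only [norm_mul, norm_pow, Real.norm_natCast, ← mul_assoc]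
  exact mul_le_mul_of_nonneg_right (mod_cast Nat.choose_add_mul_choose_add_le m a b) (by positivity)

/-- The probability that `a*_1 + ⋯ + a*_N = N + m` for i.i.d. geometric(`p`) coordinates,
`N = k + 1`. -/
noncomputable def negBinomialWeight (p : ℝ) (k m : ℕ) : ℝ :=
  (m + k).choose k * (1 - p) ^ m * p ^ (k + 1)

theorem negBinomialWeight_nonneg {p : ℝ} (hp₀ : 0 ≤ p) (hp₁ : p ≤ 1) (k m : ℕ) :
    0 ≤ negBinomialWeight p k m := by
  have : 0 ≤ 1 - p := by linarith
  unfold negBinomialWeight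
  positivity

theorem hasSum_negBinomialWeight {p : ℝ} (hp : ‖1 - p‖ < 1) (k : ℕ) :
    HasSum (negBinomialWeight p k) 1 := by
  have hp₀ : p ≠ 0 := by rintro rfl; simp at hp
  have h := (hasSum_choose_mul_geometric_of_norm_lt_one k hp).mul_right (p ^ (k + 1))
  rwa [sub_sub_cancel, one_div, inv_mul_cancel₀ (pow_ne_zero _ hp₀)] at h

theorem hasSum_add_one_mul_negBinomialWeight {p : ℝ} (hp : ‖1 - p‖ < 1) (k : ℕ) :
    HasSum (fun m : ℕ => ((m : ℝ) + k + 1) * negBinomialWeight p k m) ((k + 1) / p) := by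
  have hp₀ : p ≠ 0 := by rintro rfl; simp at hp
  have hvalue : 1 / (1 - (1 - p)) ^ (k + 1 + 1) * ((k + 1) * p ^ (k + 1)) = (k + 1) / p := by
    rw [sub_sub_cancel]
    field_simp
    ring
  refine hvalue ▸ ((hasSum_choose_mul_geometric_of_norm_lt_one (k + 1) hp).mul_right _).congr_fun
    fun m => ?_
  have h : ((m : ℝ) + k + 1) * (m + k).choose k = (m + (k + 1)).choose (k + 1) * (k + 1) := by
    exact_mod_cast Nat.add_one_mul_choose_eq (m + k) k
  unfold negBinomialWeight
  linear_combination ((1 - p) ^ m * p ^ (k + 1)) * h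

theorem hasSum_mul_negBinomialWeight {p : ℝ} (hp : ‖1 - p‖ < 1) (k : ℕ) :
    HasSum (fun m : ℕ => (m : ℝ) * negBinomialWeight p k m) ((k + 1) * (1 - p) / p) := by
  have hp₀ : p ≠ 0 := by rintro rfl; simp at hp
  have hvalue : (k + 1) / p - (k + 1) * 1 = (k + 1) * (1 - p) / p := by
    field_simp
  refine hvalue ▸ ((hasSum_add_one_mul_negBinomialWeight hp k).sub
    ((hasSum_negBinomialWeight hp k).mul_left ((k : ℝ) + 1))).congr_fun fun m => ?_
  ring

/-- The `C(m + k, k)` tuples of coordinate sum `N + m`, `N = k + 1`, are guessed at the positions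
`s_m + 1, …, s_{m+1}`, where `s_m = C(m + k, k + 1)` counts the tuples of smaller sum. -/
noncomputable def meanGuessIndex (k m : ℕ) : ℝ :=
  ((m + k).choose (k + 1) + (m + 1 + k).choose (k + 1) + 1) / 2

noncomputable def expectedSearchTime (p : ℝ) (k : ℕ) : ℝ :=
  ∑' m : ℕ, meanGuessIndex k m * negBinomialWeight p k m

theorem choose_le_meanGuessIndex (k m : ℕ) :
    ((m + k).choose (k + 1) : ℝ) ≤ meanGuessIndex k m := by
  have h : (m + k).choose (k + 1) ≤ (m + 1 + k).choose (k + 1) := Nat.choose_le_choose _ (by omega)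
  have h' : ((m + k).choose (k + 1) : ℝ) ≤ (m + 1 + k).choose (k + 1) := by exact_mod_cast h
  unfold meanGuessIndex
  linarith

theorem meanGuessIndex_le (k m : ℕ) : meanGuessIndex k m ≤ 2 * (m + (k + 1)).choose (k + 1) := by
  have h : (m + k).choose (k + 1) ≤ (m + (k + 1)).choose (k + 1) :=
    Nat.choose_le_choose _ (by omega)
  have h₁ : 1 ≤ (m + (k + 1)).choose (k + 1) := Nat.choose_pos (by omega)
  have h' : ((m + k).choose (k + 1) : ℝ) ≤ (m + (k + 1)).choose (k + 1) := by exact_mod_cast h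
  have h₁' : (1 : ℝ) ≤ (m + (k + 1)).choose (k + 1) := by exact_mod_cast h₁
  unfold meanGuessIndex
  rw [show m + 1 + k = m + (k + 1) by omega]
  linarith

theorem one_add_mul_le_meanGuessIndex (k m : ℕ) : 1 + (k + 1) * m / 2 ≤ meanGuessIndex k m := by
  have h : ((1 + m * (k + 1) : ℕ) : ℝ) ≤ (m + 1 + k).choose (k + 1) := by
    rw [show m + 1 + k = m + k + 1 by omega]
    exact_mod_cast Nat.one_add_mul_le_choose m k
  have h₀ : (0 : ℝ) ≤ (m + k).choose (k + 1) := Nat.cast_nonneg _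
  push_cast at h
  unfold meanGuessIndex
  linarith

theorem summable_meanGuessIndex_mul_negBinomialWeight {p : ℝ} (hp₀ : 0 < p) (hp₁ : p ≤ 1)
    (k : ℕ) : Summable fun m => meanGuessIndex k m * negBinomialWeight p k m := by
  have hp : ‖1 - p‖ < 1 := by rw [Real.norm_eq_abs, abs_lt]; constructor <;> linarith
  refine Summable.of_nonneg_of_le (fun m => mul_nonneg ?_ ?_) (fun m => ?_)
    (((summable_choose_mul_choose_mul_geometric (k + 1) k hp).mul_left 2).mul_right (p ^ (k + 1)))
  · exact (Nat.cast_nonneg _).trans (choose_le_meanGuessIndex k m)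
  · exact negBinomialWeight_nonneg hp₀.le hp₁ k m
  calc meanGuessIndex k m * negBinomialWeight p k m
      ≤ 2 * (m + (k + 1)).choose (k + 1) * negBinomialWeight p k m :=
        mul_le_mul_of_nonneg_right (meanGuessIndex_le k m) (negBinomialWeight_nonneg hp₀.le hp₁ k m)
    _ = _ := by unfold negBinomialWeight; ring

theorem tsum_choose_mul_negBinomialWeight_le_expectedSearchTime {p : ℝ} (hp₀ : 0 < p)
    (hp₁ : p ≤ 1) (k : ℕ) :
    ∑' m : ℕ, ((m + k).choose (k + 1) : ℝ) * negBinomialWeight p k m ≤ expectedSearchTime p k := by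
  have hw := negBinomialWeight_nonneg hp₀.le hp₁ k
  have hle : ∀ m, ((m + k).choose (k + 1) : ℝ) * negBinomialWeight p k m
      ≤ meanGuessIndex k m * negBinomialWeight p k m :=
    fun m => mul_le_mul_of_nonneg_right (choose_le_meanGuessIndex k m) (hw m)
  have hsum := summable_meanGuessIndex_mul_negBinomialWeight hp₀ hp₁ k
  exact hsum.of_nonneg_of_le (fun m => mul_nonneg (Nat.cast_nonneg _) (hw m)) hle
    |>.tsum_le_tsum hle hsum

theorem one_add_le_expectedSearchTime {p : ℝ} (hp₀ : 0 < p) (hp₁ : p ≤ 1) (k : ℕ) :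
    1 + (k + 1) ^ 2 * (1 - p) / (2 * p) ≤ expectedSearchTime p k := by
  have hp : ‖1 - p‖ < 1 := by rw [Real.norm_eq_abs, abs_lt]; constructor <;> linarith
  have hvalue :
      1 + (k + 1) / 2 * ((k + 1) * (1 - p) / p) = 1 + (k + 1) ^ 2 * (1 - p) / (2 * p) := by
    ring
  have hmean : HasSum (fun m : ℕ => (1 + (k + 1) * m / 2) * negBinomialWeight p k m)
      (1 + (k + 1) ^ 2 * (1 - p) / (2 * p)) :=
    hvalue ▸ ((hasSum_negBinomialWeight hp k).add
      ((hasSum_mul_negBinomialWeight hp k).mul_left (((k : ℝ) + 1) / 2))).congr_fun fun m => by ring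
  exact hasSum_le (fun m => mul_le_mul_of_nonneg_right (one_add_mul_le_meanGuessIndex k m)
    (negBinomialWeight_nonneg hp₀.le hp₁ k m)) hmean
    (summable_meanGuessIndex_mul_negBinomialWeight hp₀ hp₁ k).hasSum

/-- The expected search time of the non-curricular policy (indexing levels by
`m = n - N`, with `s N m = Σ_{i=1}^{m} C(N+i-2, N-1)` the cumulative level
counts and expected guess index `(s_{m} + s_{m+1} + 1)/2` within level `m`)
is lower-bounded by `Σ_m s_m · C(N+m-1, N-1)(1-1/τ)^m (1/τ)^N`, and for `τ > 1`
and all sufficiently large `N` exceeds `Nτ + 1`. -/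
theorem noncurricular_search_time (τ : ℝ) (hτ : 1 < τ)
    (s : ℕ → ℕ → ℕ)
    (hs : ∀ N m, s N m = ∑ i ∈ Finset.range m, Nat.choose (N + i - 1) (N - 1))
    (E : ℕ → ℝ)
    (hE : ∀ N, E N = ∑' m : ℕ,
      (((s N m : ℝ) + (s N (m+1) : ℝ) + 1)/2)
        * (Nat.choose (N + m - 1) (N - 1) : ℝ) * (1 - 1/τ)^m * (1/τ)^N) :
    (∀ N, 1 ≤ N → E N ≥ ∑' m : ℕ,
        (s N m : ℝ) * (Nat.choose (N + m - 1) (N - 1) : ℝ)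
          * (1 - 1/τ)^m * (1/τ)^N) ∧
    ∃ N₀ : ℕ, ∀ N > N₀, E N > N * τ + 1 := by
  set p : ℝ := 1 / τ with hp
  have hp₀ : 0 < p := one_div_pos.mpr (by linarith)
  have hp₁ : p ≤ 1 := (div_le_one (by linarith)).mpr hτ.le
  have hlevel : ∀ k m, s (k + 1) m = (m + k).choose (k + 1) := fun k m => by
    simp only [hs, add_tsub_cancel_right, ← Nat.sum_range_add_choose_eq]
    exact Finset.sum_congr rfl fun i _ => by rw [show k + 1 + i - 1 = i + k by omega]
  have hterm : ∀ k m, ((k + 1 + m - 1).choose (k + 1 - 1) : ℝ) * (1 - p) ^ m * p ^ (k + 1)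
      = negBinomialWeight p k m := fun k m => by
    rw [negBinomialWeight, show k + 1 + m - 1 = m + k by omega, add_tsub_cancel_right]
  have hE' : ∀ k, E (k + 1) = expectedSearchTime p k := fun k => by
    simp only [hE, expectedSearchTime, meanGuessIndex, hlevel, mul_assoc, hterm]
  refine ⟨fun N hN => ?_, ⌈2 * τ / (τ - 1)⌉₊, fun N hN => ?_⟩
  · obtain ⟨k, rfl⟩ := Nat.exists_eq_add_of_le' hN
    simp only [hE', ge_iff_le, hlevel, mul_assoc, hterm]
    exact tsum_choose_mul_negBinomialWeight_le_expectedSearchTime hp₀ hp₁ k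
  · obtain ⟨k, rfl⟩ : ∃ k, N = k + 1 := ⟨N - 1, by omega⟩
    have hk : 2 * τ < (k + 1) * (τ - 1) := by
      have hceil := (Nat.le_ceil _).trans_lt (Nat.cast_lt.mpr hN)
      push_cast at hceil
      rwa [div_lt_iff₀ (by linarith)] at hceil
    have hbound : (k + 1 : ℝ) ^ 2 * (1 - p) / (2 * p) = (k + 1) * ((k + 1) * (τ - 1)) / 2 := by
      rw [hp]
      field_simp
    push_cast
    rw [hE']
    refine lt_of_lt_of_le ?_ (one_add_le_expectedSearchTime hp₀ hp₁ k)
    rw [hbound]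
    nlinarith
end

section
/- Define for α > 1, γ ∈ (0,1), τ ∈ (1, γ(α-1)/(2(1-γ))): L := (αγ/((1-γ)τ+γ)) · (((1-γ)τ+γ)/((1-γ)τ+(1-α)γ) + 1/(1-γ)). Then L > 0. -/
/-!
Write `c = (1-γ)τ`. The hypotheses on `τ` say `1 - γ < c` and `2c < γ(α-1)`, so the first
factor is positive and the denominator `c + (1-α)γ` of the bracket is negative. The bracket is
then positive as soon as `(1-γ)(c+γ) < (α-1)γ - c`, and indeed
`(1-γ)(c+γ) < (1-γ)c + γc = c < (α-1)γ - c`.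
-/

lemma div_add_one_div_pos_of_neg {x y z : ℝ} (hy : y < 0) (hz : 0 < z) (h : z * x < -y) :
    0 < x / y + 1 / z := by
  rw [div_add_div _ _ hy.ne hz.ne']
  exact div_pos_of_neg_of_neg (by linarith) (mul_neg_of_neg_of_pos hy hz)

/-- For `α > 1`, `γ ∈ (0,1)`, `τ ∈ (1, γ(α-1)/(2(1-γ)))`, the limiting value gap
`L := (αγ/((1-γ)τ+γ)) · (((1-γ)τ+γ)/((1-γ)τ+(1-α)γ) + 1/(1-γ))` is positive. -/
theorem limiting_gap_positive (α γ τ : ℝ) (hα : 1 < α) (hγ0 : 0 < γ) (hγ1 : γ < 1)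
    (hτ1 : 1 < τ) (hτ2 : τ < γ*(α-1)/(2*(1-γ))) :
    0 < (α*γ/((1-γ)*τ+γ))
        * (((1-γ)*τ+γ)/((1-γ)*τ+(1-α)*γ) + 1/(1-γ)) := by
  have h1γ : 0 < 1 - γ := sub_pos.mpr hγ1
  have hcd : 2 * ((1-γ)*τ) < γ*(α-1) := by
    rw [lt_div_iff₀ (by positivity)] at hτ2; linarith
  set c := (1-γ)*τ
  have hc : 1 - γ < c := by simpa using mul_lt_mul_of_pos_left hτ1 h1γ
  have hA : 0 < c + γ := by linarith
  have hB : c + (1-α)*γ < 0 := by linarith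
  refine mul_pos (div_pos (mul_pos (by linarith) hγ0) hA)
    (div_add_one_div_pos_of_neg hB h1γ ?_)
  calc (1-γ) * (c+γ) = (1-γ)*c + (1-γ)*γ := by ring
    _ < (1-γ)*c + c*γ := by gcongr
    _ = c := by ring
    _ < -(c + (1-α)*γ) := by linarith
end
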